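/- arXiv:math/0610552 — 6 statements merged into one kernel-verified Lean document; each statement's English description precedes it below -/
import Mathlib

section
/- (Lindström–Wilf determinant formula for partial semilattices) Let L be a finite partial semilattice (a poset in which any two elements either have no common lower bound or have an infimum) and let φ: L → K be a function into a commutative ring K, extended linearly to the Möbius algebra A(L) with the convention φ(⊥) = 0 for a nonexistent meet. Then det( φ(u ∧ v) )_{u,v ∈ L} = ∏_{w ∈ L} φ(p_w), where p_w = Σ_{u ≤ w} μ(u,w)·u. -/
open Finset
open Matrix

/-- Lindström–Wilf determinant formula for finite partial semilattices.
`L` is a finite poset which is a *partial semilattice*: any two elements either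
have no common lower bound or have an infimum.  The partial meet is encoded by
`m : L → L → Option L`, with `m u v = some w` meaning `w = u ∧ v` is the
infimum of `{u, v}` and `m u v = none` meaning `u, v` have no common lower bound.
`μ` is the Möbius function of `L` (inverse of the incidence matrix).
`φ : L → K` is extended by the convention `φ(⊥) = 0` for nonexistent meets.
Then `det(φ(u ∧ v))_{u,v} = ∏_w φ(p_w)` where `p_w = Σ_{u ≤ w} μ(u,w)·u`. -/
theorem lindstroem_wilf_partial_semilattice
    {L : Type*} [Fintype L] [DecidableEq L] [PartialOrder L]
    [DecidableRel ((· ≤ ·) : L → L → Prop)]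
    {K : Type*} [CommRing K]
    (m : L → L → Option L)
    (hm_glb : ∀ u v w : L, m u v = some w → IsGLB {u, v} w)
    (hm_some : ∀ u v c : L, c ≤ u → c ≤ v → ∃ w, m u v = some w)
    (hm_none : ∀ u v : L, m u v = none → ∀ c : L, ¬ (c ≤ u ∧ c ≤ v))
    (μ : L → L → ℤ)
    (hμ0 : ∀ u v : L, ¬ u ≤ v → μ u v = 0)
    (hμ : ∀ u v : L, u ≤ v →
      (∑ w ∈ Finset.univ.filter (fun w => u ≤ w ∧ w ≤ v), μ w v) =
        if u = v then 1 else 0)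
    (φ : L → K) :
    Matrix.det (Matrix.of fun u v : L => (m u v).elim 0 φ) =
      ∏ w : L, ∑ u ∈ Finset.univ.filter (fun u => u ≤ w), (μ u w : K) * φ u := by
  classical
  set g : L → K := fun w => ∑ u ∈ Finset.univ.filter (fun u => u ≤ w), (μ u w : K) * φ u
    with hg
  -- zeta and Möbius matrices over ℤ
  set Zi : Matrix L L ℤ := Matrix.of fun u v => if u ≤ v then 1 else 0 with hZi
  set Mi : Matrix L L ℤ := Matrix.of fun u v => μ u v with hMi
  have hZM : Zi * Mi = 1 := by
    ext u v
    rw [Matrix.mul_apply]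
    simp only [hZi, hMi, Matrix.of_apply, ite_mul, one_mul, zero_mul, Matrix.one_apply]
    rw [Finset.sum_ite, Finset.sum_const_zero, add_zero]
    by_cases h : u ≤ v
    · rw [← hμ u v h]
      symm
      apply Finset.sum_subset
      · intro w hw
        simp only [Finset.mem_filter, Finset.mem_univ, true_and] at hw ⊢
        exact hw.1
      · intro w hw hw2
        simp only [Finset.mem_filter, Finset.mem_univ, true_and, not_and] at hw hw2
        exact hμ0 w v (hw2 hw)
    · rw [if_neg (by rintro rfl; exact h le_rfl)]
      apply Finset.sum_eq_zero
      intro w hw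
      simp only [Finset.mem_filter, Finset.mem_univ, true_and] at hw
      apply hμ0
      intro hwv
      exact h (hw.trans hwv)
  have hMZ : Mi * Zi = 1 := mul_eq_one_comm.mp hZM
  have key2 : ∀ u c : L, (∑ w ∈ Finset.univ.filter (fun w => w ≤ c), μ u w) =
      if u = c then 1 else 0 := by
    intro u c
    have h := congrFun (congrFun hMZ u) c
    rw [Matrix.mul_apply] at h
    simp only [hZi, hMi, Matrix.of_apply, mul_ite, mul_one, mul_zero,
      Matrix.one_apply] at h
    rw [Finset.sum_ite, Finset.sum_const_zero, add_zero] at h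
    exact h
  -- sum of g over a principal lower set
  have sumg : ∀ c : L, (∑ w ∈ Finset.univ.filter (fun w => w ≤ c), g w) = φ c := by
    intro c
    have h1 : ∀ w : L, g w = ∑ u : L, (μ u w : K) * φ u := by
      intro w
      rw [hg]
      apply Finset.sum_subset (Finset.subset_univ _)
      intro u _ hu
      simp only [Finset.mem_filter, Finset.mem_univ, true_and] at hu
      rw [hμ0 u w hu]
      push_cast
      ring
    calc (∑ w ∈ Finset.univ.filter (fun w => w ≤ c), g w)
        = ∑ w ∈ Finset.univ.filter (fun w => w ≤ c), ∑ u : L, (μ u w : K) * φ u :=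
          Finset.sum_congr rfl fun w _ => h1 w
      _ = ∑ u : L, ∑ w ∈ Finset.univ.filter (fun w => w ≤ c), (μ u w : K) * φ u :=
          Finset.sum_comm
      _ = ∑ u : L, (if u = c then (1 : K) else 0) * φ u := by
          apply Finset.sum_congr rfl
          intro u _
          rw [← Finset.sum_mul, ← Int.cast_sum, key2 u c]
          split_ifs <;> simp
      _ = φ c := by simp
  -- matrices over K
  set Z : Matrix L L K := Matrix.of fun u v => if u ≤ v then 1 else 0 with hZ
  set A : Matrix L L K := Matrix.of fun u v : L => (m u v).elim 0 φ with hA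
  have hfact : A = Zᵀ * (Matrix.diagonal g * Z) := by
    ext u v
    rw [Matrix.mul_apply]
    have hentry : ∀ w : L, Zᵀ u w * (Matrix.diagonal g * Z) w v
        = if w ≤ u ∧ w ≤ v then g w else 0 := by
      intro w
      rw [Matrix.diagonal_mul]
      simp only [Matrix.transpose_apply, hZ, Matrix.of_apply]
      split_ifs with h1 h2 h3 <;> simp_all <;> ring
    rw [Finset.sum_congr rfl fun w _ => hentry w, ← Finset.sum_filter]
    rcases hc : m u v with _ | c
    · have hempty : Finset.univ.filter (fun w => w ≤ u ∧ w ≤ v) = ∅ := by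
        apply Finset.filter_eq_empty_iff.mpr
        intro w _
        exact hm_none u v hc w
      rw [hempty]
      simp [hA, hc]
    · have hglb := hm_glb u v c hc
      have hsets : Finset.univ.filter (fun w => w ≤ u ∧ w ≤ v)
          = Finset.univ.filter (fun w => w ≤ c) := by
        apply Finset.filter_congr
        intro w _
        constructor
        · rintro ⟨h1, h2⟩
          exact hglb.2 (by rintro x (rfl | rfl) <;> simp_all)
        · intro h
          have hcu : c ≤ u := hglb.1 (by simp)
          have hcv : c ≤ v := hglb.1 (by simp)
          exact ⟨h.trans hcu, h.trans hcv⟩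
      rw [hsets, sumg c]
      simp [hA, hc]
  -- determinant of the zeta matrix is 1
  have hdetZ : Z.det = 1 := by
    set n := Fintype.card L with hn
    set e0 : Fin n ≃ L := (Fintype.equivFin L).symm with he0
    set b : L → ℕ := fun w => (Finset.univ.filter (fun x => x ≤ w)).card with hb
    have hbmono : ∀ {x y : L}, x < y → b x < b y := by
      intro x y hxy
      apply Finset.card_lt_card
      constructor
      · intro z hz
        simp only [hb, Finset.mem_filter, Finset.mem_univ, true_and] at hz ⊢
        exact hz.trans hxy.le
      · intro hsub
        have hy := hsub (by simp [hb] : y ∈ Finset.univ.filter (fun x => x ≤ y))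
        simp only [hb, Finset.mem_filter, Finset.mem_univ, true_and] at hy
        exact absurd hy hxy.not_ge
    set σ : Equiv.Perm (Fin n) := Tuple.sort (b ∘ e0) with hσ
    have hmono : Monotone ((b ∘ e0) ∘ σ) := Tuple.monotone_sort (b ∘ e0)
    set e : Fin n ≃ L := σ.trans e0 with he
    have htri : (Z.submatrix e e).BlockTriangular id := by
      intro i j hij
      simp only [id_eq] at hij
      simp only [Matrix.submatrix_apply, hZ, Matrix.of_apply, ite_eq_right_iff]
      intro hle
      exfalso
      have h1 : b (e j) ≤ b (e i) := hmono hij.le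
      have h2 : e i = e j := by
        rcases lt_or_eq_of_le hle with h | h
        · exact absurd (hbmono h) (not_lt.mpr h1)
        · exact h
      exact absurd (e.injective h2) (ne_of_gt hij)
    have hdet := Matrix.det_of_upperTriangular htri
    rw [Matrix.det_submatrix_equiv_self] at hdet
    rw [hdet]
    simp [hZ]
  rw [hfact, Matrix.det_mul, Matrix.det_mul, Matrix.det_transpose, hdetZ,
    Matrix.det_diagonal]
  ring
end

section
/- (Greene-type factorization) Let e^*: M → L and e_*: L → M be a Galois connection between finite partial semilattices (so e^* is multiplicative for the meet, with e^*(⊥) = ⊥). Fix l ∈ L and put m = e_*(l). Define p^L_{l→m} = Σ_{l' ≤ l, e_*(l') = m} μ_L(l', l)·l' in the Möbius algebra A(L). Then p^L_l = e^*(p^M_m) ∧ p^L_{l→m}, where e^* is extended linearly to the Möbius algebras. -/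
open Finset

/-- Multiplication in the Möbius algebra of a finite partial semilattice whose
partial meet is encoded by `m : L → L → Option L` (nonexistent meets are `0`). -/
noncomputable def pmoebiusMul {L : Type*} [Fintype L] [DecidableEq L]
    (m : L → L → Option L) (f g : L → ℤ) : L → ℤ :=
  fun w => ∑ p : L × L, if m p.1 p.2 = some w then f p.1 * g p.2 else 0

/-- The linear extension of a map `e : M → L` to the Möbius algebras
(pushforward of coefficient functions). -/
noncomputable def pmoebiusPush {L M : Type*} [Fintype M] [DecidableEq L]
    (e : M → L) (f : M → ℤ) : L → ℤ :=
  fun l => ∑ mm ∈ Finset.univ.filter (fun mm => e mm = l), f mm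

/-- Auxiliary transform: `pS f w = Σ_{w ≤ u} f u`.  It is injective and sends
`pmoebiusMul` to pointwise product. -/
noncomputable def pS {L : Type*} [Fintype L] [DecidableEq L] [PartialOrder L]
    [DecidableRel ((· ≤ ·) : L → L → Prop)] (f : L → ℤ) (w : L) : ℤ :=
  ∑ u ∈ Finset.univ.filter (fun u => w ≤ u), f u

lemma pS_inj {L : Type*} [Fintype L] [DecidableEq L] [PartialOrder L]
    [DecidableRel ((· ≤ ·) : L → L → Prop)]
    (f g : L → ℤ) (h : ∀ w, pS f w = pS g w) : f = g := by
  funext u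
  induction u using WellFoundedGT.induction with
  | _ u ih =>
    have hu := h u
    unfold pS at hu
    have hsplit : Finset.univ.filter (fun v => u ≤ v)
        = insert u (Finset.univ.filter (fun v => u ≤ v ∧ v ≠ u)) := by
      ext v
      simp only [mem_insert, mem_filter, mem_univ, true_and]
      constructor
      · intro hv
        by_cases hvu : v = u
        · exact Or.inl hvu
        · exact Or.inr ⟨hv, hvu⟩
      · rintro (rfl | ⟨hv, _⟩) <;> [exact le_rfl; exact hv]
    have hnot : u ∉ Finset.univ.filter (fun v => u ≤ v ∧ v ≠ u) := by simp
    rw [hsplit, Finset.sum_insert hnot, Finset.sum_insert hnot] at hu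
    have hcong : ∑ v ∈ Finset.univ.filter (fun v => u ≤ v ∧ v ≠ u), f v
        = ∑ v ∈ Finset.univ.filter (fun v => u ≤ v ∧ v ≠ u), g v := by
      refine Finset.sum_congr rfl fun v hv => ?_
      simp only [mem_filter, mem_univ, true_and] at hv
      exact ih v (lt_of_le_of_ne hv.1 (Ne.symm hv.2))
    omega

lemma pS_mul {L : Type*} [Fintype L] [DecidableEq L] [PartialOrder L]
    [DecidableRel ((· ≤ ·) : L → L → Prop)]
    (mL : L → L → Option L)
    (hglb : ∀ u v w : L, mL u v = some w → IsGLB {u, v} w)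
    (hnone : ∀ u v : L, mL u v = none → ∀ c : L, ¬ (c ≤ u ∧ c ≤ v))
    (f g : L → ℤ) (w : L) :
    pS (pmoebiusMul mL f g) w = pS f w * pS g w := by
  unfold pS pmoebiusMul
  rw [Finset.sum_comm]
  have key : ∀ p : L × L,
      (∑ u ∈ Finset.univ.filter (fun u => w ≤ u),
        if mL p.1 p.2 = some u then f p.1 * g p.2 else 0)
      = if w ≤ p.1 ∧ w ≤ p.2 then f p.1 * g p.2 else 0 := by
    intro p
    cases h : mL p.1 p.2 with
    | none =>
      rw [if_neg (hnone _ _ h w)]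
      simp
    | some u0 =>
      have hg := hglb _ _ _ h
      have hiff : (w ≤ p.1 ∧ w ≤ p.2) ↔ w ≤ u0 := by
        constructor
        · intro ⟨h1, h2⟩
          exact hg.2 (by rintro x (rfl | rfl) <;> assumption)
        · intro hw
          exact ⟨hw.trans (hg.1 (by simp)), hw.trans (hg.1 (by simp))⟩
      simp only [h, Option.some.injEq]
      rw [Finset.sum_ite_eq]
      simp [hiff]
  rw [Finset.sum_congr rfl (fun p _ => key p)]
  rw [Fintype.sum_prod_type, Finset.sum_filter, Finset.sum_filter, Finset.sum_mul_sum]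
  refine Finset.sum_congr rfl fun x _ => ?_
  refine Finset.sum_congr rfl fun y _ => ?_
  split_ifs with h1 h2 h3 <;> simp_all

lemma pS_moeb {L : Type*} [Fintype L] [DecidableEq L] [PartialOrder L]
    [DecidableRel ((· ≤ ·) : L → L → Prop)]
    (μ : L → L → ℤ)
    (hμ : ∀ u v : L, u ≤ v →
      (∑ w ∈ Finset.univ.filter (fun w => u ≤ w ∧ w ≤ v), μ w v) =
        if u = v then 1 else 0)
    (l w : L) :
    pS (fun u => if u ≤ l then μ u l else 0) w = if w = l then 1 else 0 := by
  unfold pS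
  rw [← Finset.sum_filter, Finset.filter_filter]
  by_cases hwl : w ≤ l
  · exact hμ w l hwl
  · rw [if_neg (fun h => hwl (le_of_eq h))]
    apply Finset.sum_eq_zero
    intro u hu
    simp only [mem_filter, mem_univ, true_and] at hu
    exact absurd (hu.1.trans hu.2) hwl

lemma mu_self {L : Type*} [Fintype L] [DecidableEq L] [PartialOrder L]
    [DecidableRel ((· ≤ ·) : L → L → Prop)]
    (μ : L → L → ℤ)
    (hμ : ∀ u v : L, u ≤ v →
      (∑ w ∈ Finset.univ.filter (fun w => u ≤ w ∧ w ≤ v), μ w v) =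
        if u = v then 1 else 0)
    (l : L) : μ l l = 1 := by
  have h := hμ l l le_rfl
  have hf : Finset.univ.filter (fun w => l ≤ w ∧ w ≤ l) = {l} := by
    ext v
    simp only [mem_filter, mem_univ, true_and, mem_singleton]
    constructor
    · exact fun ⟨h1, h2⟩ => le_antisymm h2 h1
    · rintro rfl; exact ⟨le_rfl, le_rfl⟩
  rw [hf, Finset.sum_singleton, if_pos rfl] at h
  exact h

lemma pS_push {L M : Type*} [Fintype L] [Fintype M] [DecidableEq L] [DecidableEq M]
    [PartialOrder L] [DecidableRel ((· ≤ ·) : L → L → Prop)]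
    (e : M → L) (h : M → ℤ) (w : L) :
    pS (pmoebiusPush e h) w
      = ∑ mm ∈ Finset.univ.filter (fun mm => w ≤ e mm), h mm := by
  unfold pS pmoebiusPush
  calc ∑ u ∈ Finset.univ.filter (fun u => w ≤ u),
        (fun x => ∑ mm ∈ Finset.univ.filter (fun mm => e mm = x), h mm) u
      = ∑ u ∈ Finset.univ.filter (fun u => w ≤ u),
          ∑ mm : M, if e mm = u then h mm else 0 := by
        exact Finset.sum_congr rfl fun u _ => Finset.sum_filter _ _
    _ = ∑ mm : M, ∑ u ∈ Finset.univ.filter (fun u => w ≤ u),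
          if e mm = u then h mm else 0 := Finset.sum_comm
    _ = ∑ mm : M, if w ≤ e mm then h mm else 0 := by
        refine Finset.sum_congr rfl fun mm _ => ?_
        rw [Finset.sum_ite_eq]
        simp
    _ = ∑ mm ∈ Finset.univ.filter (fun mm => w ≤ e mm), h mm :=
        (Finset.sum_filter _ _).symm

/-- Greene-type factorization.  Let `e^* : M → L`, `e_* : L → M` be a Galois
connection between finite partial semilattices (with partial meets `mL`, `mM`,
and `e^*` multiplicative for the meet).  Fix `l ∈ L` and put `m = e_*(l)`.
With `p^L_l = Σ_{l' ≤ l} μ_L(l',l)·l'`, `p^M_m = Σ_{m' ≤ m} μ_M(m',m)·m'` and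
`p^L_{l→m} = Σ_{l' ≤ l, e_*(l') = m} μ_L(l',l)·l'`, one has
`p^L_l = e^*(p^M_m) ∧ p^L_{l→m}` in the Möbius algebra `A(L)`. -/
theorem greene_factorization
    {L M : Type*} [Fintype L] [Fintype M] [DecidableEq L] [DecidableEq M]
    [PartialOrder L] [PartialOrder M]
    [DecidableRel ((· ≤ ·) : L → L → Prop)] [DecidableRel ((· ≤ ·) : M → M → Prop)]
    (mL : L → L → Option L) (mM : M → M → Option M)
    (hmL_glb : ∀ u v w : L, mL u v = some w → IsGLB {u, v} w)
    (hmL_some : ∀ u v c : L, c ≤ u → c ≤ v → ∃ w, mL u v = some w)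
    (hmL_none : ∀ u v : L, mL u v = none → ∀ c : L, ¬ (c ≤ u ∧ c ≤ v))
    (hmM_glb : ∀ u v w : M, mM u v = some w → IsGLB {u, v} w)
    (hmM_some : ∀ u v c : M, c ≤ u → c ≤ v → ∃ w, mM u v = some w)
    (hmM_none : ∀ u v : M, mM u v = none → ∀ c : M, ¬ (c ≤ u ∧ c ≤ v))
    (eStar : M → L) (eLow : L → M)
    (hgal : ∀ (l : L) (m : M), l ≤ eStar m ↔ eLow l ≤ m)
    (hmult : ∀ m m' : M,
      mL (eStar m) (eStar m') = Option.map eStar (mM m m'))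
    (μL : L → L → ℤ) (μM : M → M → ℤ)
    (hμL0 : ∀ u v : L, ¬ u ≤ v → μL u v = 0)
    (hμL : ∀ u v : L, u ≤ v →
      (∑ w ∈ Finset.univ.filter (fun w => u ≤ w ∧ w ≤ v), μL w v) =
        if u = v then 1 else 0)
    (hμM0 : ∀ u v : M, ¬ u ≤ v → μM u v = 0)
    (hμM : ∀ u v : M, u ≤ v →
      (∑ w ∈ Finset.univ.filter (fun w => u ≤ w ∧ w ≤ v), μM w v) =
        if u = v then 1 else 0)
    (l : L) :
    (fun l' => if l' ≤ l then μL l' l else 0) =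
      pmoebiusMul mL
        (pmoebiusPush eStar (fun m' => if m' ≤ eLow l then μM m' (eLow l) else 0))
        (fun l' => if l' ≤ l ∧ eLow l' = eLow l then μL l' l else 0) := by
  have mono : ∀ a b : L, a ≤ b → eLow a ≤ eLow b := fun a b hab =>
    (hgal a (eLow b)).mp (hab.trans ((hgal b (eLow b)).mpr le_rfl))
  apply pS_inj
  intro w
  rw [pS_mul mL hmL_glb hmL_none, pS_push,
    pS_moeb μL hμL l w]
  have hA : (∑ mm ∈ Finset.univ.filter (fun mm => w ≤ eStar mm),
      (if mm ≤ eLow l then μM mm (eLow l) else 0))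
      = if eLow w = eLow l then 1 else 0 := by
    have hfe : Finset.univ.filter (fun mm : M => w ≤ eStar mm)
        = Finset.univ.filter (fun mm => eLow w ≤ mm) := by
      ext mm; simp [hgal]
    rw [hfe]
    exact pS_moeb μM hμM (eLow l) (eLow w)
  rw [hA]
  by_cases hw : w = l
  · subst hw
    rw [if_pos rfl, if_pos rfl, one_mul]
    have hone : pS (fun l' => if l' ≤ w ∧ eLow l' = eLow w then μL l' w else 0) w = 1 := by
      unfold pS
      rw [Finset.sum_eq_single_of_mem w (by simp)]
      · simp [mu_self μL hμL w]
      · intro u hu hne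
        simp only [mem_filter, mem_univ, true_and] at hu
        rw [if_neg]
        rintro ⟨h1, _⟩
        exact hne (le_antisymm h1 hu)
    rw [hone]
  · rw [if_neg hw]
    by_cases he : eLow w = eLow l
    · rw [if_pos he, one_mul]
      symm
      by_cases hwl : w ≤ l
      · unfold pS
        have hc : ∀ u ∈ Finset.univ.filter (fun u => w ≤ u),
            (if u ≤ l ∧ eLow u = eLow l then μL u l else 0)
              = if u ≤ l then μL u l else 0 := by
          intro u hu
          simp only [mem_filter, mem_univ, true_and] at hu
          by_cases hul : u ≤ l
          · rw [if_pos ⟨hul, le_antisymm (mono u l hul) (he ▸ mono w u hu)⟩, if_pos hul]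
          · rw [if_neg (fun hh => hul hh.1), if_neg hul]
        rw [Finset.sum_congr rfl hc]
        have hm := pS_moeb μL hμL l w
        unfold pS at hm
        rw [hm, if_neg hw]
      · apply Finset.sum_eq_zero
        intro u hu
        simp only [mem_filter, mem_univ, true_and] at hu
        rw [if_neg]
        rintro ⟨h1, _⟩
        exact hwl (hu.trans h1)
    · rw [if_neg he, zero_mul]
end

section
/- Let π₁: A → B, τ₁: A → C, π₂: C → D, τ₂: B → D be maps of finite sets forming a commutative square (τ₂ ∘ π₁ = π₂ ∘ τ₁). Let K be a field, and for a map f: X → Y of finite sets let f also denote the induced linear map K[X] → K[Y] on free vector spaces, and f^∨: K[Y] → K[X] the transpose sending y to the sum of its preimages. If the square is a pullback (i.e., A ≅ B ×_D C via (π₁, τ₁)), then τ₂^∨ ∘ π₂ = π₁ ∘ τ₁^∨ as linear maps K[C] → K[B]. Conversely, if K has characteristic zero and τ₂^∨ ∘ π₂ = π₁ ∘ τ₁^∨, then the square is a pullback. -/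
open Finset

/-- Let `π₁ : A → B`, `τ₁ : A → C`, `π₂ : C → D`, `τ₂ : B → D` be a commutative
square of maps of finite sets.  For a map `f : X → Y` the induced linear map
`K[X] → K[Y]` sends a function `φ` to `y ↦ Σ_{f x = y} φ x`, and the transpose
`f^∨ : K[Y] → K[X]` is precomposition with `f`.  If the square is a pullback
(i.e. for all `b, c` with `τ₂ b = π₂ c` there is a unique `a` over them), then
`τ₂^∨ ∘ π₂ = π₁ ∘ τ₁^∨` as linear maps `K[C] → K[B]`; and conversely if `K` has
characteristic zero, this identity implies that the square is a pullback. -/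
theorem pullback_square_iff_linear_identity
    {A B C D : Type*} [Fintype A] [Fintype B] [Fintype C] [Fintype D]
    [DecidableEq B] [DecidableEq C] [DecidableEq D]
    (K : Type*) [Field K]
    (π₁ : A → B) (τ₁ : A → C) (π₂ : C → D) (τ₂ : B → D)
    (hcomm : ∀ a : A, τ₂ (π₁ a) = π₂ (τ₁ a)) :
    ((∀ (b : B) (c : C), τ₂ b = π₂ c → ∃! a : A, π₁ a = b ∧ τ₁ a = c) →
      ∀ (φ : C → K) (b : B),
        (∑ c ∈ Finset.univ.filter (fun c => π₂ c = τ₂ b), φ c) =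
          ∑ a ∈ Finset.univ.filter (fun a => π₁ a = b), φ (τ₁ a)) ∧
    (CharZero K →
      (∀ (φ : C → K) (b : B),
        (∑ c ∈ Finset.univ.filter (fun c => π₂ c = τ₂ b), φ c) =
          ∑ a ∈ Finset.univ.filter (fun a => π₁ a = b), φ (τ₁ a)) →
      ∀ (b : B) (c : C), τ₂ b = π₂ c → ∃! a : A, π₁ a = b ∧ τ₁ a = c) := by
  constructor
  · intro hpb φ b
    refine (Finset.sum_bij (fun a _ => τ₁ a) ?_ ?_ ?_ ?_).symm
    · intro a ha
      simp only [mem_filter, mem_univ, true_and] at ha ⊢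
      rw [← hcomm, ha]
    · intro a1 h1 a2 h2 heq
      simp only [mem_filter, mem_univ, true_and] at h1 h2
      exact (hpb b (τ₁ a1) (by rw [← h1, hcomm])).unique ⟨h1, rfl⟩ ⟨h2, heq.symm⟩
    · intro c hc
      simp only [mem_filter, mem_univ, true_and] at hc
      obtain ⟨a, ⟨ha1, ha2⟩, -⟩ := hpb b c hc.symm
      exact ⟨a, by simp [ha1], ha2⟩
    · intro a ha; rfl
  · intro hchar hlin b c hbc
    have h := hlin (fun c' => if c' = c then (1:K) else 0) b
    rw [Finset.sum_ite_eq' (Finset.univ.filter fun c' => π₂ c' = τ₂ b) c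
      (fun _ => (1:K))] at h
    have hc : c ∈ Finset.univ.filter (fun c' => π₂ c' = τ₂ b) := by simp [hbc.symm]
    rw [if_pos hc, Finset.sum_boole, Finset.filter_filter] at h
    have hcard : (Finset.univ.filter (fun a => π₁ a = b ∧ τ₁ a = c)).card = 1 := by
      exact_mod_cast h.symm
    obtain ⟨a, ha⟩ := Finset.card_eq_one.mp hcard
    have hamem : a ∈ Finset.univ.filter (fun a => π₁ a = b ∧ τ₁ a = c) := by
      rw [ha]; exact Finset.mem_singleton_self a
    simp only [mem_filter, mem_univ, true_and] at hamem
    refine ⟨a, hamem, fun a' ha' => ?_⟩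
    have : a' ∈ Finset.univ.filter (fun a => π₁ a = b ∧ τ₁ a = c) := by
      simp [ha'.1, ha'.2]
    rw [ha, Finset.mem_singleton] at this
    exact this
end

section
/- Let ℱ be the class of injective maps between finite sets, regarded as the surjective morphisms of Set^op, with degree function δ_t(A ↪ B) = t^{|B \ A|} for t ∈ K a field of characteristic zero. For an indecomposable such morphism e: A ↪ B (i.e., |B \ e(A)| = 1), the quantity ω_e := Σ over surjections q: B ↠ Q in Set^op with q∘(restriction) still 'surjective from A' of μ·δ, computed concretely as the signed sum over subsets A ⊆ S ⊆ B in Set (dually), equals t − |A|. Consequently ω_e ≠ 0 for all indecomposable e if and only if t ∉ ℕ. -/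
open Finset

attribute [local instance] Classical.propDecidable

lemma pairTrans {B : Type} {x y a b c : B}
    (h1 : a = b ∨ (a = x ∧ b = y) ∨ (a = y ∧ b = x))
    (h2 : b = c ∨ (b = x ∧ c = y) ∨ (b = y ∧ c = x)) :
    a = c ∨ (a = x ∧ c = y) ∨ (a = y ∧ c = x) := by
  rcases h1 with rfl | ⟨rfl, rfl⟩ | ⟨rfl, rfl⟩ <;>
    rcases h2 with rfl | ⟨h, rfl⟩ | ⟨h, rfl⟩ <;> try subst h
  all_goals tauto

def pairSetoid {B : Type} (x y : B) : Setoid B :=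
  ⟨fun p q => p = q ∨ (p = x ∧ q = y) ∨ (p = y ∧ q = x),
   ⟨fun _ => Or.inl rfl,
    by rintro a b (rfl | ⟨rfl, rfl⟩ | ⟨rfl, rfl⟩) <;> tauto,
    fun h1 h2 => pairTrans h1 h2⟩⟩

lemma pairSetoid_rel {B : Type} (x y p q : B) :
    pairSetoid x y p q ↔ (p = q ∨ (p = x ∧ q = y) ∨ (p = y ∧ q = x)) := Iff.rfl

lemma bot_rel_iff {B : Type} (p q : B) : (⊥ : Setoid B) p q ↔ p = q := by
  rw [Setoid.bot_def]

/-- In `Set^op` with the degree function `δ_t(A ↪ B) = t^{|B \ A|}` (`K` of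
characteristic zero), consider an indecomposable surjective morphism, i.e. an
injection `e : A ↪ B` with `|B \ e(A)| = 1`.  Subobjects of `B` in `Set^op` are
the quotients of `B` in `Set`, i.e. setoids `s` on `B`, ordered opposite to the
setoid order (so the subobject order is `u ≤_sub v ↔ v ≤ u` as setoids, with
top subobject the setoid `⊥`, i.e. `B` itself); `μ u v` encodes the Möbius
function of this subobject lattice (nonzero only when `v ≤ u` as setoids) via
the matrix-inversion property.  The condition `e(w) = y` dualizes to
injectivity of `A → B/s`, and `δ(w ↠ y) = t^{|B/s| - |A|}`.  Then
`ω_e = Σ_s μ(s, ⊥)·t^{|B/s| - |A|} = t - |A|`; consequently all these `ω_e`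
are nonzero if and only if `t` is not a natural number. -/
theorem setOp_omega_indecomposable
    {K : Type*} [Field K] [CharZero K] (t : K) :
    (∀ (A B : Type) (_ : Fintype A) (_ : Fintype B)
        (_ : Fintype (Setoid B))
        (e : A → B) (_ : Function.Injective e)
        (_ : Nat.card ((Set.range e)ᶜ : Set B) = 1)
        (μ : Setoid B → Setoid B → ℤ)
        (_ : ∀ u v : Setoid B, ¬ v ≤ u → μ u v = 0)
        (_ : ∀ u v : Setoid B, v ≤ u →
          (∑ w ∈ Finset.univ.filter (fun w => v ≤ w ∧ w ≤ u), μ w v) =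
            if u = v then 1 else 0),
      (∑ s ∈ (Finset.univ : Finset (Setoid B)).filter
          (fun s => Function.Injective (fun a : A => Quotient.mk s (e a))),
        (μ s ⊥ : K) * t ^ (Nat.card (Quotient s) - Fintype.card A)) =
        t - Fintype.card A) ∧
    ((∀ n : ℕ, t - (n : K) ≠ 0) ↔ ¬ ∃ n : ℕ, t = (n : K)) := by
  constructor
  · intro A B _ _ _ e he hcomp μ hμ0 hμinv
    clear hμ0
    -- the extra point b
    rw [Nat.card_coe_set_eq, Set.ncard_eq_one] at hcomp
    obtain ⟨b, hb⟩ := hcomp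
    have hbe : ∀ a : A, e a ≠ b := by
      intro a hab
      have : b ∈ (Set.range e)ᶜ := hb ▸ rfl
      exact this ⟨a, hab⟩
    have key : ∀ x : B, x = b ∨ ∃ a, e a = x := by
      intro x
      by_cases hx : x ∈ Set.range e
      · exact Or.inr hx
      · left
        have : x ∈ (Set.range e)ᶜ := hx
        rwa [hb, Set.mem_singleton_iff] at this
    -- card B = card A + 1
    have cardB : Fintype.card B = Fintype.card A + 1 := by
      have h1 := Set.ncard_add_ncard_compl (Set.range e)
      rw [hb, Set.ncard_singleton, ← Nat.card_coe_set_eq,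
        Nat.card_range_of_injective he, Nat.card_eq_fintype_card,
        Nat.card_eq_fintype_card] at h1
      omega
    set sA : A → Setoid B := fun a => pairSetoid b (e a) with hsA
    have sA_rel : ∀ a, (sA a) b (e a) := fun a => Or.inr (Or.inl ⟨rfl, rfl⟩)
    have sA_ne_bot : ∀ a, sA a ≠ ⊥ := by
      intro a h
      have := sA_rel a
      rw [h, bot_rel_iff] at this
      exact hbe a this.symm
    have sA_inj : Function.Injective sA := by
      intro a a' h
      have := sA_rel a'
      rw [← h] at this
      rcases this with h1 | ⟨_, h2⟩ | ⟨h3, _⟩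
      · exact absurd h1.symm (hbe a')
      · exact (he h2).symm
      · exact absurd h3.symm (hbe a)
    -- injectivity condition in terms of relation
    have inj_iff : ∀ s : Setoid B,
        Function.Injective (fun a : A => Quotient.mk s (e a)) ↔
          ∀ a a' : A, s (e a) (e a') → a = a' := by
      intro s
      constructor
      · intro hinj a a' h
        exact hinj (Quotient.eq.mpr h)
      · intro h a a' hq
        exact h a a' (Quotient.eq.mp hq)
    -- s satisfying the condition are ⊥ or sA a
    have bot_inj : ∀ a a' : A, (⊥ : Setoid B) (e a) (e a') → a = a' := by
      intro a a' h
      rw [bot_rel_iff] at h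
      exact he h
    have sA_cond : ∀ a a0 a' : A, (sA a) (e a0) (e a') → a0 = a' := by
      intro a a0 a' h
      rcases h with h1 | ⟨h2, _⟩ | ⟨_, h3⟩
      · exact he h1
      · exact absurd h2 (hbe a0)
      · exact absurd h3 (hbe a')
    have hfilt : ∀ s : Setoid B,
        (∀ a a' : A, s (e a) (e a') → a = a') ↔ (s = ⊥ ∨ ∃ a, s = sA a) := by
      intro s
      constructor
      · intro hinj
        by_cases hsbot : s = ⊥
        · exact Or.inl hsbot
        · right
          -- s relates some x ≠ y
          have hne : ¬ ∀ x y : B, s x y → x = y := by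
            intro h
            exact hsbot (le_bot_iff.mp (Setoid.le_def.mpr
              (fun {x y} hxy => (bot_rel_iff x y).mpr (h x y hxy))))
          push_neg at hne
          obtain ⟨x, y, hxy, hxyne⟩ := hne
          -- obtain s b (e a) for some a
          have hba : ∃ a, s b (e a) := by
            rcases key x with rfl | ⟨a1, rfl⟩
            · rcases key y with rfl | ⟨a2, rfl⟩
              · exact absurd rfl hxyne
              · exact ⟨a2, hxy⟩
            · rcases key y with rfl | ⟨a2, rfl⟩
              · exact ⟨a1, s.symm hxy⟩
              · exact absurd (congrArg e (hinj a1 a2 hxy)) hxyne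
          obtain ⟨a, hba⟩ := hba
          refine ⟨a, Setoid.ext fun p q => ?_⟩
          constructor
          · intro hpq
            rcases key p with rfl | ⟨a1, rfl⟩
            · rcases key q with rfl | ⟨a2, rfl⟩
              · exact Or.inl rfl
              · -- s b (e a2), s b (e a) ⇒ a2 = a
                have : s (e a) (e a2) := s.trans (s.symm hba) hpq
                have := hinj a a2 this
                subst this
                exact Or.inr (Or.inl ⟨rfl, rfl⟩)
            · rcases key q with rfl | ⟨a2, rfl⟩
              · have : s (e a) (e a1) := s.trans (s.symm hba) (s.symm hpq)
                have := hinj a a1 this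
                subst this
                exact Or.inr (Or.inr ⟨rfl, rfl⟩)
              · exact Or.inl (congrArg e (hinj a1 a2 hpq))
          · rintro (rfl | ⟨rfl, rfl⟩ | ⟨rfl, rfl⟩)
            · exact s.refl p
            · exact hba
            · exact s.symm hba
      · rintro (rfl | ⟨a, rfl⟩)
        · exact bot_inj
        · exact sA_cond a
    -- quotient cardinalities
    have hQbot : Nat.card (Quotient (⊥ : Setoid B)) = Fintype.card B := by
      rw [← Nat.card_eq_fintype_card]
      refine Nat.card_congr (Equiv.ofBijective (Quotient.mk ⊥) ⟨?_, ?_⟩).symm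
      · intro p q h
        exact (bot_rel_iff p q).mp (Quotient.eq.mp h)
      · exact Quotient.exists_rep
    have hQsA : ∀ a, Nat.card (Quotient (sA a)) = Fintype.card A := by
      intro a
      rw [← Nat.card_eq_fintype_card]
      refine Nat.card_congr (Equiv.ofBijective
        (fun a' : A => Quotient.mk (sA a) (e a')) ⟨?_, ?_⟩).symm
      · intro p q h
        exact sA_cond a p q (Quotient.eq.mp h)
      · intro x
        obtain ⟨p, rfl⟩ := Quotient.exists_rep x
        rcases key p with rfl | ⟨a1, rfl⟩
        · refine ⟨a, ?_⟩
          letI := sA a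
          exact Quotient.sound (Setoid.symm (sA_rel a))
        · exact ⟨a1, rfl⟩
    -- μ values
    have μbot : μ ⊥ ⊥ = 1 := by
      have h := hμinv ⊥ ⊥ le_rfl
      have hset : Finset.univ.filter
          (fun w : Setoid B => ⊥ ≤ w ∧ w ≤ ⊥) = ({⊥} : Finset (Setoid B)) := by
        ext w
        simp [le_bot_iff]
      rw [hset, Finset.sum_singleton, if_pos rfl] at h
      exact h
    have interval : ∀ a (w : Setoid B), w ≤ sA a → w = ⊥ ∨ w = sA a := by
      intro a w hw
      by_cases hwbot : w = ⊥
      · exact Or.inl hwbot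
      · right
        have hne : ¬ ∀ x y : B, w x y → x = y := by
          intro h
          exact hwbot (le_bot_iff.mp (Setoid.le_def.mpr
            (fun {x y} hxy => (bot_rel_iff x y).mpr (h x y hxy))))
        push_neg at hne
        obtain ⟨x, y, hxy, hxyne⟩ := hne
        have hrel : (sA a) x y := hw hxy
        have hwb : w b (e a) := by
          rcases hrel with h1 | ⟨rfl, rfl⟩ | ⟨rfl, rfl⟩
          · exact absurd h1 hxyne
          · exact hxy
          · exact w.symm hxy
        refine le_antisymm hw ?_
        intro p q hpq
        rcases hpq with rfl | ⟨rfl, rfl⟩ | ⟨rfl, rfl⟩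
        · exact w.refl p
        · exact hwb
        · exact w.symm hwb
    have μsA : ∀ a, μ (sA a) ⊥ = -1 := by
      intro a
      have h := hμinv (sA a) ⊥ bot_le
      have hset : Finset.univ.filter
          (fun w : Setoid B => ⊥ ≤ w ∧ w ≤ sA a) = {⊥, sA a} := by
        ext w
        simp only [Finset.mem_filter, Finset.mem_univ, true_and, bot_le,
          Finset.mem_insert, Finset.mem_singleton]
        constructor
        · rintro hw
          exact interval a w hw
        · rintro (rfl | rfl)
          · exact bot_le
          · exact le_rfl
      rw [hset, Finset.sum_pair (Ne.symm (sA_ne_bot a)), μbot,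
        if_neg (sA_ne_bot a)] at h
      omega
    -- the filter set
    have Fset : (Finset.univ : Finset (Setoid B)).filter
        (fun s => Function.Injective (fun a : A => Quotient.mk s (e a))) =
        insert ⊥ (Finset.univ.image sA) := by
      ext s
      simp only [Finset.mem_filter, Finset.mem_univ, true_and,
        Finset.mem_insert, Finset.mem_image]
      rw [inj_iff, hfilt]
      constructor
      · rintro (rfl | ⟨a, rfl⟩)
        · exact Or.inl rfl
        · exact Or.inr ⟨a, rfl⟩
      · rintro (rfl | ⟨a, rfl⟩)
        · exact Or.inl rfl
        · exact Or.inr ⟨a, rfl⟩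
    rw [Fset, Finset.sum_insert (by
      simp only [Finset.mem_image, Finset.mem_univ, true_and, not_exists]
      intro a h
      exact sA_ne_bot a h),
      Finset.sum_image (fun a _ a' _ h => sA_inj h)]
    have expbot : Nat.card (Quotient (⊥ : Setoid B)) - Fintype.card A = 1 := by
      rw [hQbot, cardB]; omega
    rw [expbot, μbot]
    have : ∀ a ∈ (Finset.univ : Finset A),
        (μ (sA a) ⊥ : K) * t ^ (Nat.card (Quotient (sA a)) - Fintype.card A)
          = -1 := by
      intro a _
      rw [μsA a, hQsA a, Nat.sub_self, pow_zero]
      push_cast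
      ring
    rw [Finset.sum_congr rfl this]
    simp [Finset.card_univ]
    ring
  · constructor
    · rintro h ⟨n, rfl⟩
      exact h n (sub_self _)
    · intro h n hn
      exact h ⟨n, sub_eq_zero.mp hn⟩
end

section
/- Let q be a prime power and K a field containing an element t. For a surjective linear map e: U ↠ V of finite 𝔽_q-vector spaces with dim ker e = 1, the sum ω_e := Σ_{S ⊆ U subspace, e(S) = V} μ(S, U)·t^{dim ker(e|_S)}, where μ is the Möbius function of the subspace lattice of U, equals t − |V| = t − q^{dim V}. (The subspaces S with e(S) = V are S = U, with μ(U,U) = 1 and δ = t, and the q^{dim V} complements of ker e, each with μ(S,U) = −1 and δ = 1.) -/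
open Finset Module

attribute [local instance] Classical.propDecidable

/-- Let `F = 𝔽_q` be a finite field with `q` elements and `K` a field
containing an element `t`.  For a surjective linear map `e : U ↠ V` of finite
`F`-vector spaces with `dim ker e = 1`, the quantity
`ω_e = Σ_{S ≤ U, e(S) = V} μ(S, U) · t^{dim ker (e|_S)}`, where `μ` is the
Möbius function of the subspace lattice of `U` (encoded via matrix inversion),
equals `t − |V| = t − q^{dim V}`. -/
theorem finite_vector_space_omega_indecomposable
    {F : Type*} [Field F] [Fintype F]
    {K : Type*} [Field K] (t : K)
    (U V : Type*) [AddCommGroup U] [Module F U] [Module.Finite F U]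
    [AddCommGroup V] [Module F V] [Module.Finite F V]
    [Fintype (Submodule F U)]
    (e : U →ₗ[F] V) (hsurj : Function.Surjective e)
    (hker : finrank F (LinearMap.ker e) = 1)
    (μ : Submodule F U → Submodule F U → ℤ)
    (hμ0 : ∀ S T : Submodule F U, ¬ S ≤ T → μ S T = 0)
    (hμ : ∀ S T : Submodule F U, S ≤ T →
      (∑ W ∈ Finset.univ.filter (fun W => S ≤ W ∧ W ≤ T), μ W T) =
        if S = T then 1 else 0) :
    (∑ S ∈ (Finset.univ : Finset (Submodule F U)).filter
        (fun S => Submodule.map e S = ⊤),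
      (μ S ⊤ : K) * t ^ finrank F (LinearMap.ker (e.domRestrict S))) =
        t - (Nat.card V : K) ∧
    (Nat.card V : K) = (Fintype.card F : K) ^ finrank F V := by
  have hrange : LinearMap.range e = ⊤ := LinearMap.range_eq_top.mpr hsurj
  have hdim : finrank F U = finrank F V + 1 := by
    have h := LinearMap.finrank_range_add_finrank_ker e
    rw [hrange, finrank_top, hker] at h
    omega
  have hfinV : Finite V := Module.finite_of_finite F
  letI : Fintype V := Fintype.ofFinite V
  have hcardV : Nat.card V = Fintype.card F ^ finrank F V := by
    rw [Nat.card_eq_fintype_card, card_eq_pow_finrank (K := F)]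
  -- second conjunct
  have hsecond : (Nat.card V : K) = (Fintype.card F : K) ^ finrank F V := by
    rw [hcardV]; push_cast; ring
  -- μ ⊤ ⊤ = 1
  have hμtop : μ ⊤ ⊤ = 1 := by
    have h := hμ ⊤ ⊤ le_rfl
    have hset : (Finset.univ.filter (fun W : Submodule F U => ⊤ ≤ W ∧ W ≤ ⊤)) = {⊤} := by
      ext W; simp [top_le_iff, eq_comm]
    rw [hset] at h
    simpa using h
  -- complements of ker e are coatoms, have μ = -1
  have hcoatom : ∀ S : Submodule F U, finrank F S + 1 = finrank F U →
      ∀ W : Submodule F U, S ≤ W → W = S ∨ W = ⊤ := by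
    intro S hS W hSW
    rcases hSW.lt_or_eq with h | h
    · right
      have h1 : finrank F S < finrank F W := Submodule.finrank_lt_finrank_of_lt h
      have h2 : finrank F W ≤ finrank F U := Submodule.finrank_le W
      exact Submodule.eq_top_of_finrank_eq (by omega)
    · left; exact h.symm
  have hμcompl : ∀ S : Submodule F U, finrank F S + 1 = finrank F U → μ S ⊤ = -1 := by
    intro S hS
    have hSne : S ≠ ⊤ := by
      intro h
      rw [h, finrank_top] at hS
      omega
    have h := hμ S ⊤ le_top
    have hset : (Finset.univ.filter (fun W : Submodule F U => S ≤ W ∧ W ≤ ⊤)) = {S, ⊤} := by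
      ext W
      simp only [Finset.mem_filter, Finset.mem_univ, true_and, le_top, and_true,
        Finset.mem_insert, Finset.mem_singleton]
      constructor
      · intro hW; exact hcoatom S hS W hW
      · rintro (rfl | rfl) <;> simp
    rw [hset, Finset.sum_pair hSne, if_neg hSne, hμtop] at h
    omega
  -- analysis of subspaces S with map e S = ⊤, S ≠ ⊤
  have hanalysis : ∀ S : Submodule F U, Submodule.map e S = ⊤ → S ≠ ⊤ →
      finrank F S + 1 = finrank F U ∧ LinearMap.ker (e.domRestrict S) = ⊥ := by
    intro S hmap hne
    have hsup : S ⊔ LinearMap.ker e = ⊤ := by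
      have := Submodule.comap_map_eq e S
      rw [hmap, Submodule.comap_top] at this
      exact this.symm
    have hinf : S ⊓ LinearMap.ker e = ⊥ := by
      by_contra hbot
      have h1 : 1 ≤ finrank F (S ⊓ LinearMap.ker e : Submodule F U) := by
        rcases Nat.eq_zero_or_pos (finrank F (S ⊓ LinearMap.ker e : Submodule F U)) with h | h
        · exact absurd (Submodule.finrank_eq_zero.mp h) hbot
        · exact h
      have heq : S ⊓ LinearMap.ker e = LinearMap.ker e :=
        Submodule.eq_of_le_of_finrank_le inf_le_right (by omega)
      have hle : LinearMap.ker e ≤ S := heq ▸ inf_le_left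
      have : S = ⊤ := by
        rw [← hsup, sup_eq_left.mpr hle]
      exact hne this
    constructor
    · have h := Submodule.finrank_sup_add_finrank_inf_eq S (LinearMap.ker e)
      rw [hsup, hinf, finrank_top, finrank_bot, hker] at h
      omega
    · rw [LinearMap.ker_domRestrict, eq_bot_iff]
      rintro ⟨x, hxS⟩ hx
      have hxk : x ∈ LinearMap.ker e := hx
      have hx0 : x ∈ S ⊓ LinearMap.ker e := ⟨hxS, hxk⟩
      rw [hinf, Submodule.mem_bot] at hx0
      rw [Submodule.mem_bot]
      exact Subtype.ext hx0
  -- counting: number of proper S with map e S = ⊤ is Nat.card V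
  obtain ⟨σ₀, hσ₀⟩ := e.exists_rightInverse_of_surjective hrange
  have hσ₀' : ∀ v, e (σ₀ v) = v := fun v => by
    have := congrArg (fun f => (f : V →ₗ[F] V) v) hσ₀
    simpa using this
  set Φ : (V →ₗ[F] LinearMap.ker e) → Submodule F U :=
    fun g => LinearMap.range (σ₀ + (LinearMap.ker e).subtype ∘ₗ g) with hΦ
  have hτe : ∀ g : V →ₗ[F] LinearMap.ker e, ∀ v,
      e ((σ₀ + (LinearMap.ker e).subtype ∘ₗ g) v) = v := by
    intro g v
    simp only [LinearMap.add_apply, LinearMap.comp_apply, map_add, hσ₀']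
    have : e ((g v : U)) = 0 := (g v).2
    simp [Submodule.subtype_apply, this]
  have hΦmem : ∀ g : V →ₗ[F] LinearMap.ker e, Submodule.map e (Φ g) = ⊤ ∧ Φ g ≠ ⊤ := by
    intro g
    constructor
    · rw [hΦ]
      rw [← LinearMap.range_comp]
      rw [LinearMap.range_eq_top]
      intro v
      exact ⟨v, hτe g v⟩
    · intro h
      have h1 : finrank F (Φ g) ≤ finrank F V := LinearMap.finrank_range_le _
      rw [h, finrank_top] at h1
      omega
  have hΦinj : Function.Injective Φ := by
    intro g g' hgg'
    ext v
    have hv : (σ₀ + (LinearMap.ker e).subtype ∘ₗ g) v ∈ Φ g' := by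
      rw [← hgg']
      exact ⟨v, rfl⟩
    obtain ⟨w, hw⟩ := hv
    have hwv : w = v := by
      have := congrArg e hw
      rw [hτe g' w, hτe g v] at this
      exact this
    rw [hwv] at hw
    have : ((g' v : U)) = ((g v : U)) := by
      have := hw
      simp only [LinearMap.add_apply, LinearMap.comp_apply] at this
      exact add_left_cancel this
    exact this.symm
  -- surjectivity onto the set of proper complements
  have hΦsurj : ∀ S : Submodule F U, Submodule.map e S = ⊤ → S ≠ ⊤ →
      ∃ g : V →ₗ[F] LinearMap.ker e, Φ g = S := by
    intro S hmap hne
    obtain ⟨_, hkerbot⟩ := hanalysis S hmap hne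
    have hbij : Function.Bijective (e.domRestrict S) := by
      constructor
      · rw [← LinearMap.ker_eq_bot]; exact hkerbot
      · rw [← LinearMap.range_eq_top, LinearMap.range_domRestrict, hmap]
    set φ := LinearEquiv.ofBijective (e.domRestrict S) hbij with hφ
    set σ : V →ₗ[F] U := S.subtype ∘ₗ (φ.symm : V →ₗ[F] S) with hσdef
    have hσe : ∀ v, e (σ v) = v := by
      intro v
      simp only [hσdef, LinearMap.comp_apply, LinearEquiv.coe_coe,
        Submodule.subtype_apply]
      exact φ.apply_symm_apply v
    have hσrange : LinearMap.range σ = S := by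
      rw [hσdef, LinearMap.range_comp, LinearEquiv.range, Submodule.map_top,
        Submodule.range_subtype]
    have hmem : ∀ v, (σ - σ₀) v ∈ LinearMap.ker e := by
      intro v
      rw [LinearMap.mem_ker]
      simp [hσe, hσ₀']
    refine ⟨LinearMap.codRestrict (LinearMap.ker e) (σ - σ₀) hmem, ?_⟩
    show LinearMap.range (σ₀ + (LinearMap.ker e).subtype ∘ₗ
      LinearMap.codRestrict (LinearMap.ker e) (σ - σ₀) hmem) = S
    have : σ₀ + (LinearMap.ker e).subtype ∘ₗ
        LinearMap.codRestrict (LinearMap.ker e) (σ - σ₀) hmem = σ := by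
      ext u
      simp
    rw [this, hσrange]
  -- the count
  have hcount : ((Finset.univ : Finset (Submodule F U)).filter
      (fun S => Submodule.map e S = ⊤ ∧ S ≠ ⊤)).card = Nat.card V := by
    have hbij : Function.Bijective
        (fun g : (V →ₗ[F] LinearMap.ker e) =>
          (⟨Φ g, hΦmem g⟩ : {S : Submodule F U // Submodule.map e S = ⊤ ∧ S ≠ ⊤})) := by
      constructor
      · intro g g' h
        exact hΦinj (congrArg Subtype.val h)
      · rintro ⟨S, hS1, hS2⟩
        obtain ⟨g, hg⟩ := hΦsurj S hS1 hS2
        exact ⟨g, Subtype.ext hg⟩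
    have h1 : Nat.card {S : Submodule F U // Submodule.map e S = ⊤ ∧ S ≠ ⊤} =
        Nat.card (V →ₗ[F] LinearMap.ker e) :=
      (Nat.card_congr (Equiv.ofBijective _ hbij)).symm
    have hfinHom : Finite (V →ₗ[F] LinearMap.ker e) := Module.finite_of_finite F
    letI : Fintype (V →ₗ[F] LinearMap.ker e) := Fintype.ofFinite _
    have h2 : Nat.card (V →ₗ[F] LinearMap.ker e) = Nat.card V := by
      rw [Nat.card_eq_fintype_card, card_eq_pow_finrank (K := F), hcardV,
        finrank_linearMap, hker, mul_one]
    have h3 : ((Finset.univ : Finset (Submodule F U)).filter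
        (fun S => Submodule.map e S = ⊤ ∧ S ≠ ⊤)).card =
        Nat.card {S : Submodule F U // Submodule.map e S = ⊤ ∧ S ≠ ⊤} := by
      rw [Nat.card_eq_fintype_card, Fintype.card_subtype]
    omega
  -- assemble the sum
  refine ⟨?_, hsecond⟩
  have htopmem : (⊤ : Submodule F U) ∈ (Finset.univ : Finset (Submodule F U)).filter
      (fun S => Submodule.map e S = ⊤) := by
    simp [Submodule.map_top, hrange]
  rw [← Finset.add_sum_erase _ _ htopmem]
  have hkertop : finrank F (LinearMap.ker (e.domRestrict ⊤)) = 1 := by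
    have h := LinearMap.finrank_range_add_finrank_ker (e.domRestrict ⊤)
    rw [LinearMap.range_domRestrict, Submodule.map_top, hrange, finrank_top, finrank_top] at h
    omega
  have hErase : ((Finset.univ : Finset (Submodule F U)).filter
      (fun S => Submodule.map e S = ⊤)).erase ⊤ =
      (Finset.univ : Finset (Submodule F U)).filter
      (fun S => Submodule.map e S = ⊤ ∧ S ≠ ⊤) := by
    ext S
    simp only [Finset.mem_erase, Finset.mem_filter, Finset.mem_univ, true_and]
    tauto
  rw [hErase]
  have hterms : ∀ S ∈ (Finset.univ : Finset (Submodule F U)).filter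
      (fun S => Submodule.map e S = ⊤ ∧ S ≠ ⊤),
      (μ S ⊤ : K) * t ^ finrank F (LinearMap.ker (e.domRestrict S)) = -1 := by
    intro S hS
    rw [Finset.mem_filter] at hS
    obtain ⟨hdimS, hkerS⟩ := hanalysis S hS.2.1 hS.2.2
    rw [hμcompl S hdimS, hkerS, finrank_bot]
    simp
  rw [Finset.sum_congr rfl hterms, Finset.sum_const, hcount, hμtop, hkertop]
  simp [sub_eq_add_neg]
end

section
/- Let C be a regular category and let x be an object such that the poset of subobjects of x satisfies the descending chain condition and the poset of subobjects of x × x satisfies the ascending chain condition. Then there is no infinite strictly descending chain x ≻ x₁ ≻ x₂ ≻ ⋯ of proper subquotients; in particular x is not a proper subquotient of itself. -/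
open CategoryTheory CategoryTheory.Limits

/-!
Measure a subquotient `x ↢ u ↠ y` by the subobject `u` of `x` together with the kernel
pair of `u ↠ y`, read as a subobject of `x ⨯ x`. A further proper step `y ↢ w ↠ z` either
shrinks `u`, or leaves it unchanged; then `w ↪ y` must be invertible, so `w ↠ z` is a
non-invertible quotient and strictly enlarges the kernel pair, because pullback-stability of
strong epis makes a quotient that identifies nothing new a monomorphism. So the measure
strictly decreases for the lexicographic order on `Subobject x × (Subobject (x ⨯ x))ᵒᵈ`,
which the two chain conditions make well-founded.
-/

def IsSubquotient {C : Type*} [Category C] (y x : C) : Prop :=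
  ∃ (u : C) (m : u ⟶ x) (e : u ⟶ y), Mono m ∧ StrongEpi e

def IsProperSubquotient {C : Type*} [Category C] (y x : C) : Prop :=
  ∃ (u : C) (m : u ⟶ x) (e : u ⟶ y),
    Mono m ∧ StrongEpi e ∧ (¬ IsIso m ∨ ¬ IsIso e)

namespace CategoryTheory

variable {C : Type*} [Category C]

def StrongEpiStableUnderPullback (C : Type*) [Category C] [HasPullbacks C] : Prop :=
  ∀ {X Y Z : C} (f : X ⟶ Z) (g : Y ⟶ Z), StrongEpi g → StrongEpi (pullback.fst f g)

section Pullbacks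

variable [HasPullbacks C]

theorem exists_epi_comp_eq_comp (hstab : StrongEpiStableUnderPullback C) {U Y T : C}
    (p : U ⟶ Y) [StrongEpi p] (t : T ⟶ Y) :
    ∃ (R : C) (σ : R ⟶ T) (r : R ⟶ U), Epi σ ∧ σ ≫ t = r ≫ p :=
  ⟨_, _, _, (hstab t p inferInstance).epi, pullback.condition⟩

theorem mono_of_comp_eq_imp_eq (hstab : StrongEpiStableUnderPullback C) {U Y Z : C}
    (p : U ⟶ Y) [StrongEpi p] (g : Y ⟶ Z)
    (h : ∀ {T : C} (a b : T ⟶ U), a ≫ p ≫ g = b ≫ p ≫ g → a ≫ p = b ≫ p) :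
    Mono g := by
  refine ⟨fun {T} s t hst => ?_⟩
  obtain ⟨R, σ, r, _, hr⟩ := exists_epi_comp_eq_comp hstab p s
  obtain ⟨Q, ρ, q, _, hq⟩ := exists_epi_comp_eq_comp hstab p (σ ≫ t)
  have : (ρ ≫ r) ≫ p = q ≫ p := h _ _ (by
    rw [Category.assoc, ← reassoc_of% hr, ← reassoc_of% hq, hst])
  rw [Category.assoc, ← hr, ← hq] at this
  exact (cancel_epi σ).1 ((cancel_epi ρ).1 this)

variable [HasBinaryProducts C] {U X Y Z : C}

theorem pullback_comp_eq_of_comp_prodLift (m : U ⟶ X) [Mono m] (p : U ⟶ Y) {T : C}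
    {k : T ⟶ pullback p p} {a b : T ⟶ U}
    (h : k ≫ prod.lift (pullback.fst p p ≫ m) (pullback.snd p p ≫ m) =
      prod.lift (a ≫ m) (b ≫ m)) :
    k ≫ pullback.fst p p = a ∧ k ≫ pullback.snd p p = b := by
  have h₁ := congrArg (· ≫ prod.fst) h
  have h₂ := congrArg (· ≫ prod.snd) h
  simp only [Category.assoc, prod.lift_fst, prod.lift_snd] at h₁ h₂
  rw [← Category.assoc, cancel_mono] at h₁ h₂
  exact ⟨h₁, h₂⟩

instance mono_prodLift_pullback_comp (m : U ⟶ X) [Mono m] (p : U ⟶ Y) :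
    Mono (prod.lift (pullback.fst p p ≫ m) (pullback.snd p p ≫ m)) :=
  ⟨fun a b h => by
    obtain ⟨h₁, h₂⟩ := pullback_comp_eq_of_comp_prodLift m p
      (a := b ≫ pullback.fst p p) (b := b ≫ pullback.snd p p)
      (h.trans (by simp only [prod.comp_lift, Category.assoc]))
    exact pullback.hom_ext h₁ h₂⟩

noncomputable def kernelPairSubobject (m : U ⟶ X) [Mono m] (p : U ⟶ Y) : Subobject (X ⨯ X) :=
  Subobject.mk (prod.lift (pullback.fst p p ≫ m) (pullback.snd p p ≫ m))

variable (m : U ⟶ X) [Mono m]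

theorem factors_kernelPairSubobject_iff (p : U ⟶ Y) {T : C} (a b : T ⟶ U) :
    (kernelPairSubobject m p).Factors (prod.lift (a ≫ m) (b ≫ m)) ↔ a ≫ p = b ≫ p := by
  rw [kernelPairSubobject, Subobject.mk_factors_iff]
  constructor
  · rintro ⟨k, hk⟩
    change T ⟶ pullback p p at k
    obtain ⟨rfl, rfl⟩ := pullback_comp_eq_of_comp_prodLift m p hk
    simp only [Category.assoc, pullback.condition]
  · intro h
    have hk : pullback.lift a b h ≫ prod.lift (pullback.fst p p ≫ m) (pullback.snd p p ≫ m) =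
        prod.lift (a ≫ m) (b ≫ m) := by
      simp only [prod.comp_lift, pullback.lift_fst_assoc, pullback.lift_snd_assoc]
    exact ⟨_, hk⟩

theorem kernelPairSubobject_le_iff (p : U ⟶ Y) (q : U ⟶ Z) :
    kernelPairSubobject m p ≤ kernelPairSubobject m q ↔
      ∀ {T : C} (a b : T ⟶ U), a ≫ p = b ≫ p → a ≫ q = b ≫ q := by
  constructor
  · intro hle T a b hab
    exact (factors_kernelPairSubobject_iff m q a b).1
      (Subobject.factors_of_le _ hle ((factors_kernelPairSubobject_iff m p a b).2 hab))
  · intro h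
    apply Subobject.le_of_factors
    rw [kernelPairSubobject, ← Subobject.underlyingIso_hom_comp_eq_mk]
    apply Subobject.factors_of_factors_right
    exact (factors_kernelPairSubobject_iff m q _ _).2 (h _ _ pullback.condition)

theorem kernelPairSubobject_comp_mono (p : U ⟶ Y) (i : Y ⟶ Z) [Mono i] :
    kernelPairSubobject m (p ≫ i) = kernelPairSubobject m p :=
  le_antisymm
    ((kernelPairSubobject_le_iff m _ _).2 fun a b h =>
      (cancel_mono i).1 (by simpa only [Category.assoc] using h))
    ((kernelPairSubobject_le_iff m _ _).2 fun a b h => by rw [reassoc_of% h])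

theorem kernelPairSubobject_isIso_comp {V : C} (ι : V ⟶ U) [IsIso ι] (p : U ⟶ Y) :
    kernelPairSubobject (ι ≫ m) (ι ≫ p) = kernelPairSubobject m p := by
  apply le_antisymm
  · refine Subobject.mk_le_mk_of_comm
      (pullback.lift (pullback.fst _ _ ≫ ι) (pullback.snd _ _ ≫ ι)
        (by simpa using pullback.condition)) ?_
    simp only [prod.comp_lift, pullback.lift_fst_assoc, pullback.lift_snd_assoc, Category.assoc]
  · refine Subobject.mk_le_mk_of_comm
      (pullback.lift (pullback.fst _ _ ≫ inv ι) (pullback.snd _ _ ≫ inv ι)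
        (by simpa using pullback.condition)) ?_
    simp only [prod.comp_lift, pullback.lift_fst_assoc, pullback.lift_snd_assoc, Category.assoc,
      IsIso.inv_hom_id_assoc]

theorem kernelPairSubobject_lt_comp (hstab : StrongEpiStableUnderPullback C)
    (p : U ⟶ Y) [StrongEpi p] (g : Y ⟶ Z) [StrongEpi g] (hg : ¬IsIso g) :
    kernelPairSubobject m p < kernelPairSubobject m (p ≫ g) := by
  refine lt_of_le_of_ne ((kernelPairSubobject_le_iff m _ _).2 fun a b h => by
    rw [reassoc_of% h]) fun heq => hg ?_
  have : Mono g := mono_of_comp_eq_imp_eq hstab p g ((kernelPairSubobject_le_iff m _ _).1 heq.ge)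
  exact isIso_of_mono_of_strongEpi g

end Pullbacks

structure SubquotientSpan (y x : C) where
  obj : C
  ι : obj ⟶ x
  π : obj ⟶ y
  [mono_ι : Mono ι]
  [strongEpi_π : StrongEpi π]

namespace SubquotientSpan

attribute [instance] mono_ι strongEpi_π

def refl (x : C) : SubquotientSpan x x := ⟨x, 𝟙 x, 𝟙 x⟩

variable [HasFiniteLimits C] {x y z : C}

noncomputable def trans (hstab : StrongEpiStableUnderPullback C) (s : SubquotientSpan y x)
    (t : SubquotientSpan z y) : SubquotientSpan z x :=
  have := hstab t.ι s.π inferInstance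
  ⟨pullback t.ι s.π, pullback.snd t.ι s.π ≫ s.ι, pullback.fst t.ι s.π ≫ t.π⟩

noncomputable def rank (s : SubquotientSpan y x) : Subobject x ×ₗ (Subobject (x ⨯ x))ᵒᵈ :=
  toLex (Subobject.mk s.ι, OrderDual.toDual (kernelPairSubobject s.ι s.π))

theorem rank_trans_lt (hstab : StrongEpiStableUnderPullback C) (s : SubquotientSpan y x)
    (t : SubquotientSpan z y) (ht : ¬IsIso t.ι ∨ ¬IsIso t.π) :
    (s.trans hstab t).rank < s.rank := by
  refine Prod.Lex.toLex_lt_toLex'.2 ⟨Subobject.mk_le_mk_of_comm _ rfl, fun hsub => ?_⟩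
  have : IsIso (pullback.snd t.ι s.π) := by
    by_contra h
    exact (Subobject.mk_lt_mk_of_comm _ rfl h).ne hsub
  have hπ : s.π = inv (pullback.snd t.ι s.π) ≫ pullback.fst t.ι s.π ≫ t.ι := by
    rw [pullback.condition, IsIso.inv_hom_id_assoc]
  have : StrongEpi t.ι := by
    have : StrongEpi ((inv (pullback.snd t.ι s.π) ≫ pullback.fst t.ι s.π) ≫ t.ι) := by
      rw [Category.assoc, ← hπ]; infer_instance
    exact strongEpi_of_strongEpi (inv (pullback.snd t.ι s.π) ≫ pullback.fst t.ι s.π) t.ι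
  have := isIso_of_mono_of_strongEpi t.ι
  have := hstab t.ι s.π inferInstance
  change kernelPairSubobject s.ι s.π <
    kernelPairSubobject (pullback.snd t.ι s.π ≫ s.ι) (pullback.fst t.ι s.π ≫ t.π)
  rw [← kernelPairSubobject_isIso_comp s.ι (pullback.snd t.ι s.π), ← pullback.condition,
    kernelPairSubobject_comp_mono]
  exact kernelPairSubobject_lt_comp _ hstab _ _ (ht.resolve_left (not_not_intro ‹_›))

end SubquotientSpan

end CategoryTheory

theorem IsProperSubquotient.exists_span {C : Type*} [Category C] {y x : C}
    (h : IsProperSubquotient y x) : ∃ s : SubquotientSpan y x, ¬IsIso s.ι ∨ ¬IsIso s.π := by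
  obtain ⟨u, m, e, _, _, hme⟩ := h
  exact ⟨⟨u, m, e⟩, hme⟩

theorem not_forall_isProperSubquotient_succ {C : Type*} [Category C] [HasFiniteLimits C]
    (hstab : StrongEpiStableUnderPullback C) (f : ℕ → C) [WellFoundedLT (Subobject (f 0))]
    [WellFoundedGT (Subobject (f 0 ⨯ f 0))] :
    ¬ ∀ n, IsProperSubquotient (f (n + 1)) (f n) := by
  intro hf
  choose t ht using fun n => (hf n).exists_span
  let s : ∀ n, SubquotientSpan (f n) (f 0) := fun n =>
    Nat.rec (motive := fun n => SubquotientSpan (f n) (f 0)) (.refl (f 0))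
      (fun n sn => sn.trans hstab (t n)) n
  exact not_strictAnti_of_wellFoundedLT (fun n => (s n).rank)
    (strictAnti_nat_of_succ_lt fun n => SubquotientSpan.rank_trans_lt hstab (s n) (t n) (ht n))

theorem no_infinite_proper_subquotient_chain_general
    {C : Type*} [Category C] [HasFiniteLimits C]
    (hstab : ∀ {X Y Z : C} (f : X ⟶ Z) (g : Y ⟶ Z),
      StrongEpi g → StrongEpi (pullback.fst f g))
    (x : C)
    (hdcc : WellFoundedLT (Subobject x))
    (hacc : WellFoundedGT (Subobject (x ⨯ x))) :
    (¬ ∃ f : ℕ → C, f 0 = x ∧ ∀ n, IsProperSubquotient (f (n + 1)) (f n)) ∧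
      ¬ IsProperSubquotient x x := by
  refine ⟨?_, fun hxx => not_forall_isProperSubquotient_succ hstab (fun _ => x) fun _ => hxx⟩
  rintro ⟨f, rfl, hf⟩
  exact not_forall_isProperSubquotient_succ hstab f hf

/-- In a regular category, if the subobjects of `x` satisfy the descending
chain condition and the subobjects of `x ⨯ x` satisfy the ascending chain
condition, then there is no infinite strictly descending chain
`x ≻ x₁ ≻ x₂ ≻ ⋯` of proper subquotients; in particular `x` is not a proper
subquotient of itself. -/
theorem no_infinite_proper_subquotient_chain
    {C : Type*} [Category C] [HasFiniteLimits C] [HasStrongEpiMonoFactorisations C]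
    (hstab : ∀ {X Y Z : C} (f : X ⟶ Z) (g : Y ⟶ Z),
      StrongEpi g → StrongEpi (pullback.fst f g))
    (x : C)
    (hdcc : WellFoundedLT (Subobject x))
    (hacc : WellFoundedGT (Subobject (x ⨯ x))) :
    (¬ ∃ f : ℕ → C, f 0 = x ∧ ∀ n, IsProperSubquotient (f (n + 1)) (f n)) ∧
      ¬ IsProperSubquotient x x :=
  no_infinite_proper_subquotient_chain_general hstab x hdcc hacc
end
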